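/- Fix 0 < a < 1. Then: (i) for every x > 1/2, 0 ≤ ψ₀(a,x) − log(2x)/(1+a) ≤ log( (2x)^{a/(1+a)} / ((2x)^{a/(1+a)} − (2x)^{−a/(1+a)}) ); (ii) for every x > 0, ψ₀(a,x) > log(2x)/(1+a); (iii) consequently, lim_{x→∞} ( ψ₀(a,x) − log(2x)/(1+a) ) = 0. -/

import Mathlib

/-- `f(a,w) = sinh(a·w)·e^w`. -/
noncomputable def fab (a w : ℝ) : ℝ := Real.sinh (a * w) * Real.exp w

/-- `M_a = (1/(2a))·log((1−a)/(1+a))`. -/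
noncomputable def Ma (a : ℝ) : ℝ := (1 / (2 * a)) * Real.log ((1 - a) / (1 + a))

/-- `L_a = −(a/√(1−a²))·((1−a)/(1+a))^{1/(2a)}`. -/
noncomputable def La (a : ℝ) : ℝ :=
  -(a / Real.sqrt (1 - a ^ 2)) * ((1 - a) / (1 + a)) ^ (1 / (2 * a))

/-!
Write `g = log(2x)/(1+a)`, so that `e^{(1+a)g} = 2x`. Since
`2 f(a,w) = e^{(1+a)w} (1 - e^{-2aw})`, we have `f(a,g) < x`, and at `w = g + c` with
`c = -log(1 - e^{-2ag}) ≥ 0` the factor `e^{(1+a)c} ≥ e^c = (1 - e^{-2ag})⁻¹` compensates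
the second factor, so `f(a,w) ≥ x`. As `f(a,·)` is increasing on `[M_a, ∞)`, `ψ₀(a,x)` lies
between `g` and `g + c`, and `c → 0` as `x → ∞`. The bound in the statement is `c` written in
terms of `(2x)^{a/(1+a)} = e^{ag}`.
-/

open Real Filter Topology

lemma neg_log_one_sub_exp_neg_nonneg {t : ℝ} (ht : 0 ≤ t) : 0 ≤ -log (1 - exp (-t)) :=
  neg_nonneg.mpr (log_nonpos (by linarith [exp_le_one_iff.mpr (neg_nonpos.mpr ht)])
    (by linarith [exp_pos (-t)]))

lemma log_exp_div_exp_sub_exp_neg (t : ℝ) :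
    log (exp t / (exp t - exp (-t))) = -log (1 - exp (-(2 * t))) := by
  have hfactor : exp t - exp (-t) = exp t * (1 - exp (-(2 * t))) := by
    rw [mul_one_sub, ← exp_add]; ring_nf
  rw [hfactor, div_mul_cancel_left₀ (exp_pos t).ne', log_inv]

lemma log_rpow_div_rpow_sub_rpow_neg {y : ℝ} (hy : 0 < y) (b : ℝ) :
    log (y ^ b / (y ^ b - y ^ (-b))) = -log (1 - exp (-(2 * (log y * b)))) := by
  rw [rpow_def_of_pos hy, rpow_def_of_pos hy, mul_neg, log_exp_div_exp_sub_exp_neg]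

lemma tendsto_log_rpow_div_rpow_sub_rpow_neg {b : ℝ} (hb : 0 < b) :
    Tendsto (fun y : ℝ => log (y ^ b / (y ^ b - y ^ (-b)))) atTop (𝓝 0) := by
  have hexp : Tendsto (fun y => 1 - exp (-(2 * (log y * b)))) atTop (𝓝 1) := by
    have ht := tendsto_neg_atTop_atBot.comp
      ((tendsto_log_atTop.atTop_mul_const hb).const_mul_atTop two_pos)
    simpa using (tendsto_exp_atBot.comp ht).const_sub 1
  have hlim := hexp.log one_ne_zero |>.neg
  rw [log_one, neg_zero] at hlim
  exact hlim.congr' <| (eventually_gt_atTop 0).mono fun y hy =>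
    (log_rpow_div_rpow_sub_rpow_neg hy b).symm

lemma fab_eq_exp_sub_exp (a w : ℝ) :
    fab a w = (exp ((1 + a) * w) - exp ((1 - a) * w)) / 2 := by
  rw [fab, sinh_eq, div_mul_eq_mul_div, sub_mul, ← exp_add, ← exp_add]
  ring_nf

lemma two_mul_fab (a w : ℝ) :
    2 * fab a w = exp ((1 + a) * w) * (1 - exp (-(2 * (a * w)))) := by
  rw [fab_eq_exp_sub_exp, mul_one_sub, ← exp_add]
  ring_nf

lemma fab_lt_exp_div_two (a w : ℝ) : fab a w < exp ((1 + a) * w) / 2 := by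
  rw [fab_eq_exp_sub_exp]
  linarith [exp_pos ((1 - a) * w)]

lemma hasDerivAt_fab (a w : ℝ) :
    HasDerivAt (fab a)
      (((1 + a) * exp ((1 + a) * w) - (1 - a) * exp ((1 - a) * w)) / 2) w := by
  have hfun : fab a = fun w => (exp ((1 + a) * w) - exp ((1 - a) * w)) / 2 :=
    funext (fab_eq_exp_sub_exp a)
  rw [hfun]
  have hexp (b : ℝ) : HasDerivAt (fun x => exp (b * x)) (exp (b * w) * b) w := by
    simpa using ((hasDerivAt_id w).const_mul b).exp
  exact (((hexp (1 + a)).sub (hexp (1 - a))).div_const 2).congr_deriv (by ring)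

section Bounds

variable {a : ℝ}

lemma Ma_neg (ha0 : 0 < a) (ha1 : a < 1) : Ma a < 0 := by
  have hlog : log ((1 - a) / (1 + a)) < 0 :=
    log_neg (div_pos (by linarith) (by linarith)) (by rw [div_lt_one (by linarith)]; linarith)
  exact mul_neg_of_pos_of_neg (by positivity) hlog

lemma La_neg (ha0 : 0 < a) (ha1 : a < 1) : La a < 0 := by
  have hcoef : 0 < a / √(1 - a ^ 2) := div_pos ha0 (sqrt_pos.mpr (by nlinarith))
  have hpow : 0 < ((1 - a) / (1 + a)) ^ (1 / (2 * a)) :=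
    rpow_pos_of_pos (div_pos (by linarith) (by linarith)) _
  rw [La, neg_mul]
  exact neg_neg_of_pos (mul_pos hcoef hpow)

/-- The derivative is `e^{(1-a)w} ((1+a) e^{2aw} - (1-a)) / 2`, which changes sign at `M_a`. -/
lemma deriv_fab_pos (ha0 : 0 < a) (ha1 : a < 1) {w : ℝ} (hw : Ma a < w) :
    0 < ((1 + a) * exp ((1 + a) * w) - (1 - a) * exp ((1 - a) * w)) / 2 := by
  have hlog : log ((1 - a) / (1 + a)) < 2 * a * w := by
    have h := mul_lt_mul_of_pos_left hw (by positivity : (0 : ℝ) < 2 * a)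
    rwa [Ma, ← mul_assoc, mul_one_div_cancel (by positivity), one_mul] at h
  have hratio : 1 - a < (1 + a) * exp (2 * a * w) := by
    rw [log_lt_iff_lt_exp (div_pos (by linarith) (by linarith)),
      div_lt_iff₀ (by linarith)] at hlog
    linarith
  have hsplit : exp ((1 + a) * w) = exp (2 * a * w) * exp ((1 - a) * w) := by
    rw [← exp_add]; ring_nf
  rw [hsplit]
  nlinarith [exp_pos ((1 - a) * w)]

lemma strictMonoOn_fab (ha0 : 0 < a) (ha1 : a < 1) :
    StrictMonoOn (fab a) (Set.Ici (Ma a)) := by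
  refine strictMonoOn_of_deriv_pos (convex_Ici _)
    (fun w _ => (hasDerivAt_fab a w).continuousAt.continuousWithinAt) fun w hw => ?_
  rw [interior_Ici] at hw
  rw [(hasDerivAt_fab a w).deriv]
  exact deriv_fab_pos ha0 ha1 hw

lemma exp_le_two_mul_fab (ha0 : 0 < a) {g : ℝ} (hg : 0 < g) :
    exp ((1 + a) * g) ≤ 2 * fab a (g - log (1 - exp (-(2 * (a * g))))) := by
  set q := exp (-(2 * (a * g))) with hq
  have hq1 : q < 1 := exp_lt_one_iff.mpr (by nlinarith)
  set c := -log (1 - q) with hc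
  have hc0 : 0 ≤ c := neg_log_one_sub_exp_neg_nonneg (by positivity)
  have hexpc : exp c * (1 - q) = 1 := by
    rw [hc, exp_neg, exp_log (by linarith), inv_mul_cancel₀ (by linarith)]
  have hgrowth : exp ((1 + a) * g) * exp c ≤ exp ((1 + a) * (g + c)) := by
    rw [← exp_add]
    exact exp_le_exp.mpr (by nlinarith)
  have hdecay : 1 - q ≤ 1 - exp (-(2 * (a * (g + c)))) := by
    have : exp (-(2 * (a * (g + c)))) ≤ q := exp_le_exp.mpr (by nlinarith)
    linarith
  rw [show g - log (1 - q) = g + c by rw [hc]; ring, two_mul_fab]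
  calc exp ((1 + a) * g) = exp ((1 + a) * g) * exp c * (1 - q) := by
        rw [mul_assoc, hexpc, mul_one]
    _ ≤ exp ((1 + a) * (g + c)) * (1 - exp (-(2 * (a * (g + c))))) :=
      mul_le_mul hgrowth hdecay (by linarith) (exp_pos _).le

variable {ψ g : ℝ}

lemma lt_of_fab_eq_exp_div_two (ha0 : 0 < a) (ha1 : a < 1) (hψ : Ma a ≤ ψ)
    (hf : fab a ψ = exp ((1 + a) * g) / 2) : g < ψ := by
  rcases lt_or_ge g (Ma a) with hg | hg
  · exact hg.trans_le hψ
  · exact (strictMonoOn_fab ha0 ha1).lt_iff_lt hg hψ |>.mp (hf ▸ fab_lt_exp_div_two a g)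

lemma sub_le_of_fab_eq_exp_div_two (ha0 : 0 < a) (ha1 : a < 1) (hg : 0 < g) (hψ : Ma a ≤ ψ)
    (hf : fab a ψ = exp ((1 + a) * g) / 2) :
    ψ - g ≤ -log (1 - exp (-(2 * (a * g)))) := by
  have hc0 := neg_log_one_sub_exp_neg_nonneg (by positivity : 0 ≤ 2 * (a * g))
  have hw : Ma a ≤ g - log (1 - exp (-(2 * (a * g)))) := by linarith [Ma_neg ha0 ha1]
  have := (strictMonoOn_fab ha0 ha1).le_iff_le hψ hw |>.mp
    (by linarith [exp_le_two_mul_fab ha0 hg])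
  linarith

end Bounds

/-- Bounds on `ψ₀(a,x) − log(2x)/(1+a)` and the limit
`ψ₀(a,x) − log(2x)/(1+a) → 0` as `x → ∞`. -/
theorem stmt_13 (a : ℝ) (ha0 : 0 < a) (ha1 : a < 1) (psi0 : ℝ → ℝ)
    (hpsi0 : ∀ x, La a ≤ x → Ma a ≤ psi0 x ∧ fab a (psi0 x) = x) :
    (∀ x : ℝ, 1 / 2 < x →
      0 ≤ psi0 x - Real.log (2 * x) / (1 + a) ∧
      psi0 x - Real.log (2 * x) / (1 + a) ≤
        Real.log ((2 * x) ^ (a / (1 + a)) /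
          ((2 * x) ^ (a / (1 + a)) - (2 * x) ^ (-(a / (1 + a)))))) ∧
    (∀ x : ℝ, 0 < x → Real.log (2 * x) / (1 + a) < psi0 x) ∧
    Filter.Tendsto (fun x => psi0 x - Real.log (2 * x) / (1 + a))
      Filter.atTop (nhds 0) := by
  have hpsi : ∀ x, 0 < x →
      Ma a ≤ psi0 x ∧ fab a (psi0 x) = exp ((1 + a) * (log (2 * x) / (1 + a))) / 2 := by
    intro x hx
    obtain ⟨hM, hf⟩ := hpsi0 x (La_neg ha0 ha1 |>.trans hx).le
    rw [hf, mul_div_cancel₀ _ (by linarith), exp_log (by linarith)]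
    exact ⟨hM, by ring⟩
  have hlower : ∀ x : ℝ, 0 < x → log (2 * x) / (1 + a) < psi0 x := fun x hx =>
    lt_of_fab_eq_exp_div_two ha0 ha1 (hpsi x hx).1 (hpsi x hx).2
  have hbounds : ∀ x : ℝ, 1 / 2 < x → 0 ≤ psi0 x - log (2 * x) / (1 + a) ∧
      psi0 x - log (2 * x) / (1 + a) ≤
        log ((2 * x) ^ (a / (1 + a)) / ((2 * x) ^ (a / (1 + a)) - (2 * x) ^ (-(a / (1 + a))))) := by
    intro x hx
    refine ⟨sub_nonneg.mpr (hlower x (by linarith)).le, ?_⟩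
    rw [log_rpow_div_rpow_sub_rpow_neg (by linarith), mul_div_left_comm]
    exact sub_le_of_fab_eq_exp_div_two ha0 ha1 (div_pos (log_pos (by linarith)) (by linarith))
      (hpsi x (by linarith)).1 (hpsi x (by linarith)).2
  refine ⟨hbounds, hlower, ?_⟩
  have hgap := (tendsto_log_rpow_div_rpow_sub_rpow_neg (b := a / (1 + a)) (by positivity)).comp
    (tendsto_id.const_mul_atTop two_pos)
  refine tendsto_of_tendsto_of_tendsto_of_le_of_le' tendsto_const_nhds hgap ?_ ?_ <;>
    filter_upwards [eventually_gt_atTop (1 / 2)] with x hx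
  exacts [(hbounds x hx).1, (hbounds x hx).2]
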